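/- arXiv:2207.01658 — 8 statements merged into one kernel-verified Lean document; each statement's English description precedes it below -/
import Mathlib

section
/- Let z₁, z₂, z₃ ∈ ℂ be noncollinear, and write (z − z₁)(z − z₂)(z − z₃) = z³ + az² + bz + c, so that a = −(z₁ + z₂ + z₃), b = z₁z₂ + z₁z₃ + z₂z₃, c = −z₁z₂z₃. Then every u ∈ ℂ satisfying (a² − 3b)u² + (ab − 9c)u + (b² − 3ac) = 0 satisfies the classical isodynamic-point equations |u − z₁|·|z₃ − z₂| = |u − z₂|·|z₃ − z₁| = |u − z₃|·|z₂ − z₁|. -/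
open Complex

/-!
Put `A = (u - z₁)(z₃ - z₂)`, `B = (u - z₂)(z₁ - z₃)`, `C = (u - z₃)(z₂ - z₁)`. Then
`A + B + C = 0` identically, and the isodynamic polynomial at `u` is `-(AB + BC + CA)`.
So at a root `A, B, C` are the roots of `t³ - ABC`; in particular `A³ = B³ = C³`,
and taking norms gives `|A| = |B| = |C|`.
-/

theorem cubes_eq_of_add_eq_zero_of_mul_add_eq_zero {R : Type*} [CommRing R] {x y z : R}
    (hsum : x + y + z = 0) (hprod : x * y + y * z + z * x = 0) :
    x ^ 3 = y ^ 3 ∧ y ^ 3 = z ^ 3 :=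
  ⟨by linear_combination (x ^ 2 - y ^ 2) * hsum - (x - y) * hprod,
    by linear_combination (y ^ 2 - z ^ 2) * hsum - (y - z) * hprod⟩

theorem norm_eq_norm_of_pow_eq_pow {K : Type*} [NormedDivisionRing K] {x y : K} {n : ℕ}
    (hn : n ≠ 0) (h : x ^ n = y ^ n) : ‖x‖ = ‖y‖ :=
  (pow_left_inj₀ (norm_nonneg x) (norm_nonneg y) hn).mp (by rw [← norm_pow, ← norm_pow, h])

theorem isodynamic_eval_eq_neg_sum_mul {R : Type*} [CommRing R] (z₁ z₂ z₃ u : R) :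
    let a := -(z₁ + z₂ + z₃)
    let b := z₁ * z₂ + z₁ * z₃ + z₂ * z₃
    let c := -(z₁ * z₂ * z₃)
    let A := (u - z₁) * (z₃ - z₂)
    let B := (u - z₂) * (z₁ - z₃)
    let C := (u - z₃) * (z₂ - z₁)
    (a ^ 2 - 3 * b) * u ^ 2 + (a * b - 9 * c) * u + (b ^ 2 - 3 * a * c)
      = -(A * B + B * C + C * A) := by
  intros
  ring

theorem isodynamic_points_of_noncollinear_triple_general
    (z₁ z₂ z₃ : ℂ)
    (a b c : ℂ)
    (ha : a = -(z₁ + z₂ + z₃))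
    (hb : b = z₁ * z₂ + z₁ * z₃ + z₂ * z₃)
    (hc : c = -(z₁ * z₂ * z₃))
    (u : ℂ)
    (hu : (a ^ 2 - 3 * b) * u ^ 2 + (a * b - 9 * c) * u + (b ^ 2 - 3 * a * c) = 0) :
    ‖u - z₁‖ * ‖z₃ - z₂‖
      = ‖u - z₂‖ * ‖z₃ - z₁‖ ∧
    ‖u - z₂‖ * ‖z₃ - z₁‖
      = ‖u - z₃‖ * ‖z₂ - z₁‖ := by
  subst ha hb hc
  set A := (u - z₁) * (z₃ - z₂)
  set B := (u - z₂) * (z₁ - z₃)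
  set C := (u - z₃) * (z₂ - z₁)
  have hsum : A + B + C = 0 := by ring
  have hprod : A * B + B * C + C * A = 0 :=
    neg_eq_zero.mp ((isodynamic_eval_eq_neg_sum_mul z₁ z₂ z₃ u).symm.trans hu)
  obtain ⟨hAB, hBC⟩ := cubes_eq_of_add_eq_zero_of_mul_add_eq_zero hsum hprod
  replace hAB := norm_eq_norm_of_pow_eq_pow three_ne_zero hAB
  replace hBC := norm_eq_norm_of_pow_eq_pow three_ne_zero hBC
  simp only [A, B, C, norm_mul, norm_sub_rev z₁ z₃] at hAB hBC
  exact ⟨hAB, hBC⟩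

/-- Every root `u` of the isodynamic polynomial
`(a² − 3b)u² + (ab − 9c)u + (b² − 3ac)` of the cubic with noncollinear roots
`z₁, z₂, z₃` satisfies the classical isodynamic-point equations. -/
theorem isodynamic_points_of_noncollinear_triple
    (z₁ z₂ z₃ : ℂ)
    (h12 : z₁ ≠ z₂) (h13 : z₁ ≠ z₃) (h23 : z₂ ≠ z₃)
    (hnc : (z₃ - z₁) / (z₂ - z₁) ∉ Set.range ((↑) : ℝ → ℂ))
    (a b c : ℂ)
    (ha : a = -(z₁ + z₂ + z₃))
    (hb : b = z₁ * z₂ + z₁ * z₃ + z₂ * z₃)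
    (hc : c = -(z₁ * z₂ * z₃))
    (u : ℂ)
    (hu : (a ^ 2 - 3 * b) * u ^ 2 + (a * b - 9 * c) * u + (b ^ 2 - 3 * a * c) = 0) :
    ‖u - z₁‖ * ‖z₃ - z₂‖
      = ‖u - z₂‖ * ‖z₃ - z₁‖ ∧
    ‖u - z₂‖ * ‖z₃ - z₁‖
      = ‖u - z₃‖ * ‖z₂ - z₁‖ :=
  isodynamic_points_of_noncollinear_triple_general z₁ z₂ z₃ a b c ha hb hc u hu
end

section
/- Let p, q ∈ ℂ[X], let d ≥ 1 be an integer, and let w = p/q be the corresponding rational function. Fix z* ∈ ℂ with q(z*) ≠ 0 and w′(z*) ≠ 0, and let R_w(z) = z − d·w(z)/w′(z) be the associated rational function of w. Then for every u* ∈ ℂ the following are equivalent: (i) d·w(z*) + (u* − z*)·w′(z*) = 0 and (d − 1)·w′(z*) + (u* − z*)·w″(z*) = 0 (i.e., z* is a multiple root of the polar derivative D(z, u*) = d·w(z) + (u* − z)·w′(z)); (ii) u* = R_w(z*) and R_w′(z*) = 0 (i.e., u* is the critical value of R_w attained at the critical point z*). -/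
open Polynomial

/-- For a rational function `w = p/q`, a point `z*` with
`q(z*) ≠ 0` and `w′(z*) ≠ 0`, and any `u*`: `z*` is a multiple root of the
polar derivative `D(z, u*) = d·w(z) + (u* − z)·w′(z)` if and only if
`u* = R_w(z*)` and `R_w′(z*) = 0`, where `R_w(z) = z − d·w(z)/w′(z)` is the
associated rational function of `w`. -/
theorem polar_derivative_multiple_root_iff_critical_value
    (p q : ℂ[X]) (d : ℕ) (hd : 1 ≤ d)
    (w : ℂ → ℂ) (hw : w = fun z => p.eval z / q.eval z)
    (Rw : ℂ → ℂ) (hRw : Rw = fun z => z - (d : ℂ) * w z / deriv w z)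
    (zs : ℂ) (hq : q.eval zs ≠ 0) (hw' : deriv w zs ≠ 0) (us : ℂ) :
    ((d : ℂ) * w zs + (us - zs) * deriv w zs = 0 ∧
      ((d : ℂ) - 1) * deriv w zs + (us - zs) * deriv (deriv w) zs = 0)
    ↔ (us = Rw zs ∧ deriv Rw zs = 0) := by
  -- the explicit derivative of w on the set where q ≠ 0
  set g : ℂ → ℂ := fun z =>
    ((derivative p).eval z * q.eval z - p.eval z * (derivative q).eval z) / (q.eval z) ^ 2
    with hg_def
  have hU : IsOpen {z : ℂ | q.eval z ≠ 0} := by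
    have : Continuous fun z : ℂ => q.eval z := q.continuous
    exact isOpen_ne.preimage this
  have key : ∀ z ∈ {z : ℂ | q.eval z ≠ 0}, HasDerivAt w (g z) z := by
    intro z hz
    rw [hw]
    exact (p.hasDerivAt z).div (q.hasDerivAt z) hz
  have hmem : {z : ℂ | q.eval z ≠ 0} ∈ nhds zs := hU.mem_nhds hq
  have hEq : deriv w =ᶠ[nhds zs] g := by
    filter_upwards [hmem] with z hz
    exact (key z hz).deriv
  have hg : DifferentiableAt ℂ g zs := by
    apply DifferentiableAt.div
    · exact ((derivative p).differentiableAt.mul q.differentiableAt).sub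
        (p.differentiableAt.mul (derivative q).differentiableAt)
    · exact q.differentiableAt.pow 2
    · exact pow_ne_zero 2 hq
  have hdw : DifferentiableAt ℂ (deriv w) zs := hEq.differentiableAt_iff.mpr hg
  have hw1 : DifferentiableAt ℂ w zs := by
    rw [hw]; exact p.differentiableAt.div q.differentiableAt hq
  set A := w zs with hA
  set B := deriv w zs with hB
  set C := deriv (deriv w) zs with hC
  have hBd : HasDerivAt w B zs := hw1.hasDerivAt
  have hCd : HasDerivAt (deriv w) C zs := hdw.hasDerivAt
  have hRder : HasDerivAt Rw
      (1 - (((d : ℂ) * B) * B - ((d : ℂ) * A) * C) / B ^ 2) zs := by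
    rw [hRw]
    exact (hasDerivAt_id zs).sub ((hBd.const_mul ((d : ℂ))).div hCd hw')
  have hRd : deriv Rw zs = 1 - (((d : ℂ) * B) * B - ((d : ℂ) * A) * C) / B ^ 2 :=
    hRder.deriv
  have hRwz : Rw zs = zs - (d : ℂ) * A / B := by rw [hRw]
  rw [hRd, hRwz]
  constructor
  · rintro ⟨h1, h2⟩
    constructor
    · field_simp
      linear_combination h1
    · field_simp
      linear_combination C * h1 - B * h2
  · rintro ⟨h1, h2⟩
    have h1' : (us - zs) * B = -((d : ℂ) * A) := by
      rw [h1]; field_simp; ring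
    constructor
    · linear_combination h1'
    · field_simp at h2
      have : (us - zs) = -((d : ℂ) * A) / B := by
        field_simp; linear_combination h1'
      rw [this]
      field_simp
      linear_combination -h2
end

section
/- Let A, B ∈ ℂ[X] with B ≠ 0. The polynomial pencil f(z, u) = A(z) + u·B(z) has a multiple root with respect to z for every value u ∈ ℂ — i.e., for every u ∈ ℂ there exists z ∈ ℂ with A(z) + u·B(z) = 0 and A′(z) + u·B′(z) = 0 — if and only if A and B have a common root z* which is a root of multiplicity at least 2 of both A and B, i.e., there exists z* ∈ ℂ with A(z*) = A′(z*) = 0 and B(z*) = B′(z*) = 0. -/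
/-!
Write `W = A B' - A' B` for the Wronskian. A multiple root of `A + u B` is a root of
`W(A + u B, B) = W(A, B)`, and a point that is a multiple root of `A + u B` for two different
values of `u` is a multiple root of both `A` and `B`. So if there is no common multiple root,
the witnesses for distinct `u` are distinct roots of `W`; since `ℂ` is infinite, `W = 0`. Then
`A = c B` for a constant `c` (divide out `gcd A B` and use that coprime polynomials with
vanishing Wronskian are constant), and a multiple root of `A + (1 - c) B = B` is a common one.
-/

open Polynomial

namespace Polynomial

theorem sq_X_sub_C_dvd_iff {R : Type*} [CommRing R] [IsDomain R] {p : R[X]} {t : R} :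
    (X - C t) ^ 2 ∣ p ↔ p.IsRoot t ∧ (derivative p).IsRoot t := by
  rcases eq_or_ne p 0 with rfl | hp
  · simp
  · rw [← le_rootMultiplicity_iff hp, ← one_lt_rootMultiplicity_iff_isRoot hp]
    rfl

section CommRing

variable {R : Type*} [CommRing R]

theorem wronskian_mul_mul (g a b : R[X]) :
    wronskian (g * a) (g * b) = g ^ 2 * wronskian a b := by
  simp only [wronskian, derivative_mul]
  ring

theorem wronskian_add_C_mul_self_left (a b : R[X]) (u : R) :
    wronskian (a + C u * b) b = wronskian a b := by
  simp only [wronskian, derivative_add, derivative_C_mul]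
  ring

theorem dvd_wronskian_of_sq_dvd_left {d p : R[X]} (q : R[X]) (h : d ^ 2 ∣ p) :
    d ∣ wronskian p q :=
  have hp : d ∣ p := (dvd_pow_self d two_ne_zero).trans h
  have hp' : d ∣ derivative p := by simpa using pow_sub_one_dvd_derivative_of_pow_dvd h
  (hp.mul_right _).sub (hp'.mul_right _)

end CommRing

section Field

variable {K : Type*} [Field K]

theorem dvd_and_dvd_of_dvd_add_C_mul_of_ne {d a b : K[X]} {u v : K} (huv : u ≠ v)
    (hu : d ∣ a + C u * b) (hv : d ∣ a + C v * b) : d ∣ a ∧ d ∣ b := by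
  have hb : d ∣ b := by
    rw [← dvd_C_mul (sub_ne_zero.mpr huv)]
    convert dvd_sub hu hv using 1
    rw [C_sub]
    ring
  refine ⟨?_, hb⟩
  convert dvd_sub hu (hb.mul_left (C u)) using 1
  ring

theorem exists_eq_C_mul_of_wronskian_eq_zero [CharZero K] {a b : K[X]} (hb : b ≠ 0)
    (hW : wronskian a b = 0) : ∃ c : K, a = C c * b := by
  classical
  obtain ⟨a', b', ha, hb', hcop⟩ := extract_gcd a b
  generalize gcd a b = g at ha hb'
  subst ha hb'
  have hg : g ≠ 0 := left_ne_zero_of_mul hb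
  have hW' : wronskian a' b' = 0 := by
    rw [wronskian_mul_mul] at hW
    exact (mul_eq_zero.mp hW).resolve_left (pow_ne_zero 2 hg)
  obtain ⟨hda, hdb⟩ := ((gcd_isUnit_iff a' b').mp hcop).wronskian_eq_zero_iff.mp hW'
  rw [eq_C_of_derivative_eq_zero hdb] at hb ⊢
  rw [eq_C_of_derivative_eq_zero hda]
  have hb0 : b'.coeff 0 ≠ 0 := fun h => hb (by rw [h, C_0, mul_zero])
  refine ⟨a'.coeff 0 / b'.coeff 0, ?_⟩
  rw [mul_left_comm, ← C_mul, div_mul_cancel₀ _ hb0]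

variable {a b : K[X]}

theorem exists_sq_dvd_and_sq_dvd_of_wronskian_ne_zero [Infinite K] (hW : wronskian a b ≠ 0)
    (h : ∀ u : K, ∃ z : K, (X - C z) ^ 2 ∣ a + C u * b) :
    ∃ z : K, (X - C z) ^ 2 ∣ a ∧ (X - C z) ^ 2 ∣ b := by
  by_contra hno
  choose z hz using h
  have hinj : Function.Injective z := fun u v huv => by
    by_contra hne
    exact hno ⟨z v, dvd_and_dvd_of_dvd_add_C_mul_of_ne hne (huv ▸ hz u) (hz v)⟩
  have hroot : ∀ u, z u ∈ {x | (wronskian a b).IsRoot x} := fun u =>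
    dvd_iff_isRoot.mp <|
      wronskian_add_C_mul_self_left a b u ▸ dvd_wronskian_of_sq_dvd_left b (hz u)
  exact Set.infinite_of_injective_forall_mem hinj hroot (finite_setOfPred_isRoot hW)

theorem exists_sq_dvd_and_sq_dvd_of_wronskian_eq_zero [CharZero K] (hW : wronskian a b = 0)
    (h : ∀ u : K, ∃ z : K, (X - C z) ^ 2 ∣ a + C u * b) :
    ∃ z : K, (X - C z) ^ 2 ∣ a ∧ (X - C z) ^ 2 ∣ b := by
  rcases eq_or_ne b 0 with rfl | hb
  · obtain ⟨z, hz⟩ := h 0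
    exact ⟨z, by simpa using hz, dvd_zero _⟩
  obtain ⟨c, rfl⟩ := exists_eq_C_mul_of_wronskian_eq_zero hb hW
  obtain ⟨z, hz⟩ := h (1 - c)
  have hbz : (X - C z) ^ 2 ∣ b := by
    convert hz using 1
    rw [C_sub, C_1]
    ring
  exact ⟨z, hbz.mul_left _, hbz⟩

theorem forall_exists_sq_dvd_add_C_mul_iff [CharZero K] :
    (∀ u : K, ∃ z : K, (X - C z) ^ 2 ∣ a + C u * b) ↔
      ∃ z : K, (X - C z) ^ 2 ∣ a ∧ (X - C z) ^ 2 ∣ b := by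
  refine ⟨fun h => ?_, fun ⟨z, ha, hb⟩ u => ⟨z, ha.add (hb.mul_left _)⟩⟩
  by_cases hW : wronskian a b = 0
  · exact exists_sq_dvd_and_sq_dvd_of_wronskian_eq_zero hW h
  · exact exists_sq_dvd_and_sq_dvd_of_wronskian_ne_zero hW h

end Field

end Polynomial

theorem pencil_multiple_root_for_all_u_iff_common_double_root_general
    (A B : ℂ[X]) :
    (∀ u : ℂ, ∃ z : ℂ,
      A.eval z + u * B.eval z = 0 ∧
      (derivative A).eval z + u * (derivative B).eval z = 0)
    ↔ ∃ zs : ℂ,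
        A.eval zs = 0 ∧ (derivative A).eval zs = 0 ∧
        B.eval zs = 0 ∧ (derivative B).eval zs = 0 := by
  have h := forall_exists_sq_dvd_add_C_mul_iff (a := A) (b := B)
  simp only [sq_X_sub_C_dvd_iff, IsRoot.def, derivative_add, derivative_C_mul, eval_add,
    eval_mul, eval_C] at h
  simpa only [and_assoc] using h

/-- The polynomial pencil `f(z,u) = A(z) + u·B(z)` (with `B ≠ 0`)
has a multiple root in `z` for every value of `u` if and only if `A` and `B`
have a common root which is a root of multiplicity at least 2 of both. -/
theorem pencil_multiple_root_for_all_u_iff_common_double_root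
    (A B : ℂ[X]) (hB : B ≠ 0) :
    (∀ u : ℂ, ∃ z : ℂ,
      A.eval z + u * B.eval z = 0 ∧
      (derivative A).eval z + u * (derivative B).eval z = 0)
    ↔ ∃ zs : ℂ,
        A.eval zs = 0 ∧ (derivative A).eval zs = 0 ∧
        B.eval zs = 0 ∧ (derivative B).eval zs = 0 :=
  pencil_multiple_root_for_all_u_iff_common_double_root_general A B
end

section
/- Let P ∈ ℂ[X] be monic of degree d ≥ 1. Then the polar derivative D_P(z,u) = d·P(z) + (u − z)·P′(z) has a multiple root with respect to z for every u ∈ ℂ — i.e., for every u ∈ ℂ there exists z with D_P(z,u) = 0 and (d−1)·P′(z) + (u − z)·P″(z) = 0 — if and only if P has a root of multiplicity at least 3, i.e., there exists z* with P(z*) = P′(z*) = P″(z*) = 0. Equivalently, the isodynamic map ID_d is well defined at P exactly when all roots of P have multiplicity at most 2. -/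
/-!
Eliminating `u - z` between the two equations shows that a multiple root `z` of `D_P(·, u)` is a
root of `H = d P P'' - (d - 1) P'²`, and that `z` determines `u` unless `P`, `P'` and `P''` all
vanish at `z`. So without a triple root of `P` and with `H ≠ 0`, only finitely many `u` admit a
multiple root. For `d ≥ 3`, `H = 0` is impossible: at a root `a` of `P`, `H(a) = -(d - 1) P'(a)²`
forces `P'(a) = 0`, and then `H''(a) = (2 - d) P''(a)²` forces `P''(a) = 0`. For `d ≤ 2` one of the
two equations is the Taylor expansion at `z` of the linear polynomial `P` or `P'`, so it reads
`P(u) = 0` or `P'(u) = 0`.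
-/

open Polynomial

namespace Polynomial

section CommRing

variable {R : Type*} [CommRing R]

def IsMultiplePolarRoot (d : ℕ) (P : R[X]) (u z : R) : Prop :=
  (d : R) * P.eval z + (u - z) * (derivative P).eval z = 0 ∧
    ((d : R) - 1) * (derivative P).eval z + (u - z) * (derivative (derivative P)).eval z = 0

/-- The Hessian of the binary form `y ^ d * P (x / y)`, dehomogenized and divided by `d - 1`. -/
noncomputable def polarHessian (d : ℕ) (P : R[X]) : R[X] :=
  C (d : R) * P * derivative (derivative P) - C ((d : R) - 1) * derivative P ^ 2

def IsTripleRoot (P : R[X]) (z : R) : Prop :=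
  P.eval z = 0 ∧ (derivative P).eval z = 0 ∧ (derivative (derivative P)).eval z = 0

variable {d : ℕ} {P : R[X]} {u z : R}

theorem IsTripleRoot.isMultiplePolarRoot (h : IsTripleRoot P z) (u : R) :
    IsMultiplePolarRoot d P u z :=
  ⟨by rw [h.1, h.2.1]; ring, by rw [h.2.1, h.2.2]; ring⟩

theorem IsMultiplePolarRoot.eval_polarHessian (h : IsMultiplePolarRoot d P u z) :
    (polarHessian d P).eval z = 0 := by
  simp only [polarHessian, eval_sub, eval_mul, eval_pow, eval_C]
  linear_combination (derivative (derivative P)).eval z * h.1 - (derivative P).eval z * h.2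

theorem eval_add_sub_mul_eval_derivative_of_natDegree_le_one (h : P.natDegree ≤ 1) (z u : R) :
    P.eval z + (u - z) * (derivative P).eval z = P.eval u := by
  obtain ⟨a, b, rfl⟩ := exists_eq_X_add_C_of_natDegree_le_one h
  simp only [eval_add, eval_mul, eval_C, eval_X, derivative_add, derivative_mul, derivative_C,
    derivative_X, zero_mul, mul_one, zero_add, add_zero]
  ring

end CommRing

section IsDomain

variable {R : Type*} [CommRing R] [IsDomain R] {d : ℕ} {P : R[X]} {z : R}

theorem subsingleton_setOf_isMultiplePolarRoot (hd : (d : R) ≠ 0) (hz : ¬ IsTripleRoot P z) :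
    {u | IsMultiplePolarRoot d P u z}.Subsingleton := by
  intro u hu v hv
  by_contra huv
  have huv' : u - v ≠ 0 := sub_ne_zero.mpr huv
  have h1 : (derivative P).eval z = 0 :=
    (mul_eq_zero.mp (by linear_combination hu.1 - hv.1)).resolve_left huv'
  have h2 : (derivative (derivative P)).eval z = 0 :=
    (mul_eq_zero.mp (by linear_combination hu.2 - hv.2)).resolve_left huv'
  have h0 : P.eval z = 0 :=
    (mul_eq_zero.mp (by linear_combination hu.1 - (u - z) * h1)).resolve_left hd
  exact hz ⟨h0, h1, h2⟩

theorem finite_setOf_exists_isMultiplePolarRoot (hd : (d : R) ≠ 0) (hH : polarHessian d P ≠ 0)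
    (hP : ∀ z, ¬ IsTripleRoot P z) :
    {u | ∃ z, IsMultiplePolarRoot d P u z}.Finite := by
  refine ((finite_setOfPred_isRoot hH).biUnion fun z _ ↦
    (subsingleton_setOf_isMultiplePolarRoot hd (hP z)).finite).subset ?_
  rintro u ⟨z, hz⟩
  exact Set.mem_biUnion hz.eval_polarHessian hz

theorem eval_derivative_eq_zero_of_polarHessian_eq_zero (hd1 : (d : R) ≠ 1) (hd2 : (d : R) ≠ 2)
    (hH : polarHessian d P = 0) (ha : P.eval z = 0) :
    (derivative P).eval z = 0 ∧ (derivative (derivative P)).eval z = 0 := by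
  have h1 : (derivative P).eval z = 0 := by
    have := congrArg (eval z) hH
    simp only [polarHessian, eval_sub, eval_mul, eval_pow, eval_C, eval_zero, ha] at this
    have h : ((d : R) - 1) * (derivative P).eval z ^ 2 = 0 := by linear_combination -this
    exact pow_eq_zero_iff two_ne_zero |>.mp ((mul_eq_zero.mp h).resolve_left (sub_ne_zero.mpr hd1))
  refine ⟨h1, ?_⟩
  have := congrArg (fun Q ↦ (derivative (derivative Q)).eval z) hH
  simp only [polarHessian, map_natCast, map_sub, map_one, derivative_mul,
    derivative_natCast, zero_mul, zero_add, derivative_one, sub_self, derivative_pow,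
    Nat.cast_ofNat, Nat.add_one_sub_one, pow_one, derivative_add, derivative_C, eval_sub, eval_add,
    eval_mul, eval_natCast, h1, mul_zero, add_zero, ha, eval_one, eval_C, derivative_zero,
    eval_zero] at this
  have h : (2 - (d : R)) * (derivative (derivative P)).eval z ^ 2 = 0 := by
    linear_combination this
  exact pow_eq_zero_iff two_ne_zero |>.mp
    ((mul_eq_zero.mp h).resolve_left (sub_ne_zero.mpr (Ne.symm hd2)))

theorem rootMultiplicity_le_two_iff [CharZero R] (hP : P ≠ 0) :
    P.rootMultiplicity z ≤ 2 ↔ ¬ IsTripleRoot P z := by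
  rw [← not_lt, lt_rootMultiplicity_iff_isRoot_iterate_derivative hP]
  simp [IsTripleRoot, Nat.le_succ_iff, or_imp, forall_and]

end IsDomain

section IsAlgClosed

variable {K : Type*} [Field K] [IsAlgClosed K] [CharZero K] {P : K[X]}

theorem polarHessian_ne_zero (h3 : 3 ≤ P.natDegree)
    (hP : ∀ z, ¬ IsTripleRoot P z) :
    polarHessian P.natDegree P ≠ 0 := by
  intro hH
  obtain ⟨a, ha⟩ := IsAlgClosed.exists_root P (natDegree_pos_iff_degree_pos.mp (by omega)).ne'
  have hd1 : (P.natDegree : K) ≠ 1 := by exact_mod_cast (by omega : P.natDegree ≠ 1)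
  have hd2 : (P.natDegree : K) ≠ 2 := by exact_mod_cast (by omega : P.natDegree ≠ 2)
  exact hP a ⟨ha, eval_derivative_eq_zero_of_polarHessian_eq_zero hd1 hd2 hH ha⟩

theorem exists_forall_not_isMultiplePolarRoot (hd : 1 ≤ P.natDegree)
    (hP : ∀ z, ¬ IsTripleRoot P z) :
    ∃ u, ∀ z, ¬ IsMultiplePolarRoot P.natDegree P u z := by
  have hP0 : P ≠ 0 := ne_zero_of_natDegree_gt hd
  obtain h1 | h2 | h3 : P.natDegree = 1 ∨ P.natDegree = 2 ∨ 3 ≤ P.natDegree := by omega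
  · obtain ⟨u, hu⟩ := (finite_setOfPred_isRoot hP0).infinite_compl.nonempty
    refine ⟨u, fun z hz ↦ hu ?_⟩
    have := hz.1
    rwa [h1, Nat.cast_one, one_mul,
      eval_add_sub_mul_eval_derivative_of_natDegree_le_one h1.le] at this
  · have hP' : derivative P ≠ 0 := fun h ↦ by
      have := derivative_eq_zero.mp h
      omega
    obtain ⟨u, hu⟩ := (finite_setOfPred_isRoot hP').infinite_compl.nonempty
    refine ⟨u, fun z hz ↦ hu ?_⟩
    have := hz.2
    rwa [h2, Nat.cast_two, show (2 : K) - 1 = 1 by norm_num, one_mul,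
      eval_add_sub_mul_eval_derivative_of_natDegree_le_one
        ((natDegree_derivative_le P).trans (by omega))] at this
  · have hd0 : (P.natDegree : K) ≠ 0 := Nat.cast_ne_zero.mpr (by omega)
    obtain ⟨u, hu⟩ := (finite_setOf_exists_isMultiplePolarRoot hd0
      (polarHessian_ne_zero h3 hP) hP).infinite_compl.nonempty
    exact ⟨u, fun z hz ↦ hu ⟨z, hz⟩⟩

end IsAlgClosed

end Polynomial

theorem polar_derivative_multiple_root_for_all_u_iff_triple_root_general
    (d : ℕ) (hd : 1 ≤ d) (P : ℂ[X]) (hdeg : P.natDegree = d) :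
    ((∀ u : ℂ, ∃ z : ℂ,
        (d : ℂ) * P.eval z + (u - z) * (derivative P).eval z = 0 ∧
        ((d : ℂ) - 1) * (derivative P).eval z
          + (u - z) * (derivative (derivative P)).eval z = 0)
      ↔ ∃ zs : ℂ, P.eval zs = 0 ∧ (derivative P).eval zs = 0 ∧
          (derivative (derivative P)).eval zs = 0) ∧
    ((¬ ∀ u : ℂ, ∃ z : ℂ,
        (d : ℂ) * P.eval z + (u - z) * (derivative P).eval z = 0 ∧
        ((d : ℂ) - 1) * (derivative P).eval z
          + (u - z) * (derivative (derivative P)).eval z = 0)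
      ↔ ∀ z : ℂ, P.rootMultiplicity z ≤ 2) := by
  subst hdeg
  have key : (∀ u, ∃ z, IsMultiplePolarRoot P.natDegree P u z) ↔ ∃ zs, IsTripleRoot P zs := by
    refine ⟨fun h ↦ ?_, fun ⟨zs, hzs⟩ u ↦ ⟨zs, hzs.isMultiplePolarRoot u⟩⟩
    by_contra hP
    obtain ⟨u, hu⟩ := exists_forall_not_isMultiplePolarRoot hd (not_exists.mp hP)
    obtain ⟨z, hz⟩ := h u
    exact hu z hz
  refine ⟨key, key.not.trans ?_⟩
  rw [not_exists]
  exact forall_congr' fun z ↦ (rootMultiplicity_le_two_iff (ne_zero_of_natDegree_gt hd)).symm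

/-- For a monic `P` of degree `d ≥ 1`, the polar derivative
`D_P(z,u) = d·P(z) + (u − z)·P′(z)` has a multiple root in `z` for every
`u ∈ ℂ` if and only if `P` has a root of multiplicity at least 3; equivalently,
the isodynamic map `ID_d` is well defined at `P` exactly when all roots of `P`
have multiplicity at most 2. -/
theorem polar_derivative_multiple_root_for_all_u_iff_triple_root
    (d : ℕ) (hd : 1 ≤ d) (P : ℂ[X]) (hm : P.Monic) (hdeg : P.natDegree = d) :
    ((∀ u : ℂ, ∃ z : ℂ,
        (d : ℂ) * P.eval z + (u - z) * (derivative P).eval z = 0 ∧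
        ((d : ℂ) - 1) * (derivative P).eval z
          + (u - z) * (derivative (derivative P)).eval z = 0)
      ↔ ∃ zs : ℂ, P.eval zs = 0 ∧ (derivative P).eval zs = 0 ∧
          (derivative (derivative P)).eval zs = 0) ∧
    ((¬ ∀ u : ℂ, ∃ z : ℂ,
        (d : ℂ) * P.eval z + (u - z) * (derivative P).eval z = 0 ∧
        ((d : ℂ) - 1) * (derivative P).eval z
          + (u - z) * (derivative (derivative P)).eval z = 0)
      ↔ ∀ z : ℂ, P.rootMultiplicity z ≤ 2) :=
  polar_derivative_multiple_root_for_all_u_iff_triple_root_general d hd P hdeg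
end

section
/- Let d ≥ 1 and ∂ ≥ 1 be integers and let p, q ∈ ℂ[X] be monic with deg p = d + ∂ and deg q = ∂. Then the numerator of the polar derivative ND(z,u) = d·p(z)q(z) + (u − z)·(p′(z)q(z) − p(z)q′(z)) has a multiple root with respect to z for every u ∈ ℂ — i.e., for every u there exists z with ND(z,u) = 0 and ∂_zND(z,u) = 0 — if and only if it is not the case that p and q are coprime and every root of p and every root of q has multiplicity at most 2. Equivalently, the rational isodynamic map ID_{d,∂} is well defined at w = p/q exactly when p and q are coprime and all their roots have multiplicity at most 2. -/
open Polynomial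

lemma aux_three_le {p : ℂ[X]} {z : ℂ} (hne : p ≠ 0)
    (h0 : p.eval z = 0) (h1 : (derivative p).eval z = 0)
    (h2 : (derivative (derivative p)).eval z = 0) :
    2 < p.rootMultiplicity z := by
  apply Polynomial.lt_rootMultiplicity_of_isRoot_iterate_derivative_of_mem_nonZeroDivisors' hne
  · intro m hm
    interval_cases m <;>
      simp [Function.iterate_succ, IsRoot, h0, h1, h2]
  · intro m hm hm0
    exact mem_nonZeroDivisors_of_ne_zero (by exact_mod_cast hm0)

lemma aux_evals_zero {p : ℂ[X]} {z : ℂ} (h : 2 < p.rootMultiplicity z) :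
    p.eval z = 0 ∧ (derivative p).eval z = 0 ∧ (derivative (derivative p)).eval z = 0 := by
  refine ⟨?_, ?_, ?_⟩
  · exact Polynomial.isRoot_iterate_derivative_of_lt_rootMultiplicity (n := 0) (by omega)
  · have := Polynomial.isRoot_iterate_derivative_of_lt_rootMultiplicity
      (p := p) (t := z) (n := 1) (by omega)
    simpa using this
  · have := Polynomial.isRoot_iterate_derivative_of_lt_rootMultiplicity
      (p := p) (t := z) (n := 2) (by omega)
    simpa [Function.iterate_succ] using this

lemma aux_common_root {p q : ℂ[X]} (hp : p ≠ 0) (h : ¬ IsCoprime p q) :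
    ∃ z : ℂ, p.eval z = 0 ∧ q.eval z = 0 := by
  set g := EuclideanDomain.gcd p q with hg
  have hgu : ¬ IsUnit g := fun hu => h (EuclideanDomain.gcd_isUnit_iff.1 hu)
  have hg0 : g ≠ 0 := by
    intro h0
    exact hp (EuclideanDomain.gcd_eq_zero_iff.1 (hg ▸ h0)).1
  have hdeg : g.degree ≠ 0 := fun hd => hgu (Polynomial.isUnit_iff_degree_eq_zero.2 hd)
  obtain ⟨z, hz⟩ := IsAlgClosed.exists_root g hdeg
  refine ⟨z, ?_, ?_⟩
  · exact hz.dvd (EuclideanDomain.gcd_dvd_left p q)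
  · exact hz.dvd (EuclideanDomain.gcd_dvd_right p q)

/-- For monic `p, q` with `deg p = d + ∂`, `deg q = ∂`
(`d, ∂ ≥ 1`), the numerator of the polar derivative
`ND(z,u) = d·p(z)q(z) + (u − z)·(p′(z)q(z) − p(z)q′(z))` has a multiple root
in `z` for every `u ∈ ℂ` if and only if it is not the case that `p` and `q`
are coprime with all roots of multiplicity at most 2; equivalently, the
rational isodynamic map `ID_{d,∂}` is well defined at `w = p/q` exactly when
`p` and `q` are coprime and all their roots have multiplicity at most 2. -/
theorem rational_polar_derivative_multiple_root_for_all_u_iff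
    (d e : ℕ) (hd : 1 ≤ d) (he : 1 ≤ e)
    (p q : ℂ[X]) (hp : p.Monic) (hq : q.Monic)
    (hpd : p.natDegree = d + e) (hqd : q.natDegree = e) :
    (∀ u : ℂ, ∃ z : ℂ,
      (C (d : ℂ) * (p * q)
        + (C u - X) * (derivative p * q - p * derivative q)).eval z = 0 ∧
      (derivative (C (d : ℂ) * (p * q)
        + (C u - X) * (derivative p * q - p * derivative q))).eval z = 0)
    ↔ ¬ (IsCoprime p q ∧
          ∀ z : ℂ, p.rootMultiplicity z ≤ 2 ∧ q.rootMultiplicity z ≤ 2) := by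
  have hp0 : p ≠ 0 := hp.ne_zero
  have hq0 : q ≠ 0 := hq.ne_zero
  have hd0 : (d : ℂ) ≠ 0 := Nat.cast_ne_zero.2 (by omega)
  constructor
  · -- forward direction
    intro H
    rintro ⟨hcop, hmult⟩
    have hnc : ∀ z : ℂ, ¬ (p.eval z = 0 ∧ q.eval z = 0) := by
      rintro z ⟨h1, h2⟩
      obtain ⟨a, b, hab⟩ := hcop
      have := congrArg (eval z) hab
      simp [h1, h2] at this
    have caseA : ∀ z : ℂ,
        (derivative p).eval z * q.eval z - p.eval z * (derivative q).eval z = 0 →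
        (derivative (derivative p)).eval z * q.eval z
          - p.eval z * (derivative (derivative q)).eval z = 0 →
        p.eval z * q.eval z = 0 → False := by
      intro z hW hW' hpq
      rcases mul_eq_zero.1 hpq with hP | hQ
      · have hQne : q.eval z ≠ 0 := fun h => hnc z ⟨hP, h⟩
        have hP1 : (derivative p).eval z = 0 := by
          have h1 : (derivative p).eval z * q.eval z = 0 := by
            linear_combination hW + (derivative q).eval z * hP
          exact (mul_eq_zero.1 h1).resolve_right hQne
        have hP2 : (derivative (derivative p)).eval z = 0 := by
          have h1 : (derivative (derivative p)).eval z * q.eval z = 0 := by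
            linear_combination hW' + (derivative (derivative q)).eval z * hP
          exact (mul_eq_zero.1 h1).resolve_right hQne
        have := aux_three_le hp0 hP hP1 hP2
        have := (hmult z).1
        omega
      · have hPne : p.eval z ≠ 0 := fun h => hnc z ⟨h, hQ⟩
        have hQ1 : (derivative q).eval z = 0 := by
          have h1 : p.eval z * (derivative q).eval z = 0 := by
            linear_combination - hW + (derivative p).eval z * hQ
          exact (mul_eq_zero.1 h1).resolve_left hPne
        have hQ2 : (derivative (derivative q)).eval z = 0 := by
          have h1 : p.eval z * (derivative (derivative q)).eval z = 0 := by
            linear_combination - hW' + (derivative (derivative p)).eval z * hQ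
          exact (mul_eq_zero.1 h1).resolve_left hPne
        have := aux_three_le hq0 hQ hQ1 hQ2
        have := (hmult z).2
        omega
    choose f hf using H
    set Rp : ℂ[X] :=
      (derivative p * q - p * derivative q) * (derivative p * q - p * derivative q)
      + C (d : ℂ) * ((p * q) * (derivative (derivative p) * q - p * derivative (derivative q))
          - (derivative p * q + p * derivative q)
            * (derivative p * q - p * derivative q)) with hRp
    have hK1 : ∀ u : ℂ, Rp.eval (f u) = 0 := by
      intro u
      obtain ⟨hF, hG⟩ := hf u
      rw [hRp]
      simp only [derivative_add, derivative_sub, derivative_mul, derivative_C, derivative_X,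
        zero_mul, mul_zero, add_zero, zero_add, one_mul, mul_one,
        eval_add, eval_mul, eval_sub, eval_C, eval_X, eval_one, eval_zero] at hF hG ⊢
      linear_combination ((derivative (derivative p)).eval (f u) * q.eval (f u)
          - p.eval (f u) * (derivative (derivative q)).eval (f u)) * hF
        - ((derivative p).eval (f u) * q.eval (f u)
          - p.eval (f u) * (derivative q).eval (f u)) * hG
    have hinj : Function.Injective f := by
      intro u₁ u₂ hz
      by_contra hne
      obtain ⟨hF1, hG1⟩ := hf u₁
      have hc2 := hf u₂
      rw [← hz] at hc2
      obtain ⟨hF2, hG2⟩ := hc2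
      simp only [derivative_add, derivative_sub, derivative_mul, derivative_C, derivative_X,
        zero_mul, mul_zero, add_zero, zero_add, one_mul, mul_one,
        eval_add, eval_mul, eval_sub, eval_C, eval_X, eval_one, eval_zero]
        at hF1 hG1 hF2 hG2
      have hsub : u₁ - u₂ ≠ 0 := sub_ne_zero.2 hne
      have hW : (derivative p).eval (f u₁) * q.eval (f u₁)
          - p.eval (f u₁) * (derivative q).eval (f u₁) = 0 := by
        have h1 : (u₁ - u₂) * ((derivative p).eval (f u₁) * q.eval (f u₁)
            - p.eval (f u₁) * (derivative q).eval (f u₁)) = 0 := by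
          linear_combination hF1 - hF2
        exact (mul_eq_zero.1 h1).resolve_left hsub
      have hW' : (derivative (derivative p)).eval (f u₁) * q.eval (f u₁)
          - p.eval (f u₁) * (derivative (derivative q)).eval (f u₁) = 0 := by
        have h1 : (u₁ - u₂) * ((derivative (derivative p)).eval (f u₁) * q.eval (f u₁)
            - p.eval (f u₁) * (derivative (derivative q)).eval (f u₁)) = 0 := by
          linear_combination hG1 - hG2
        exact (mul_eq_zero.1 h1).resolve_left hsub
      have hpq : p.eval (f u₁) * q.eval (f u₁) = 0 := by
        have h1 : (d : ℂ) * (p.eval (f u₁) * q.eval (f u₁)) = 0 := by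
          linear_combination hF1 - (u₁ - f u₁) * hW
        exact (mul_eq_zero.1 h1).resolve_left hd0
      exact caseA (f u₁) hW hW' hpq
    -- Rp is nonzero
    have hq_pos : 0 < q.natDegree := by rw [hqd]; omega
    have hdq : q.degree ≠ 0 := ne_of_gt (natDegree_pos_iff_degree_pos.mp hq_pos)
    obtain ⟨r, hQr⟩ := IsAlgClosed.exists_root q hdq
    have hQr' : q.eval r = 0 := hQr
    have hPr : p.eval r ≠ 0 := fun h => hnc r ⟨h, hQr'⟩
    have hR0 : Rp ≠ 0 := by
      by_cases hq1 : (derivative q).eval r = 0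
      · have hq2 : (derivative (derivative q)).eval r ≠ 0 := by
          intro h2
          have := aux_three_le hq0 hQr' hq1 h2
          have := (hmult r).2
          omega
        intro h0
        have hcalc : (derivative (derivative Rp)).eval r
            = (2 + (d : ℂ)) * (p.eval r * (derivative (derivative q)).eval r) ^ 2 := by
          rw [hRp]
          simp only [derivative_add, derivative_sub, derivative_mul, derivative_C,
            zero_mul, mul_zero, add_zero, zero_add,
            eval_add, eval_mul, eval_sub, eval_C, hQr', hq1]
          ring
        rw [h0] at hcalc
        simp only [derivative_zero, eval_zero] at hcalc
        have h2d : (2 : ℂ) + (d : ℂ) ≠ 0 := by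
          have h' : ((2 + d : ℕ) : ℂ) ≠ 0 := Nat.cast_ne_zero.2 (by omega)
          push_cast at h'
          exact h'
        exact (mul_ne_zero h2d (pow_ne_zero 2 (mul_ne_zero hPr hq2))) hcalc.symm
      · intro h0
        have hcalc : Rp.eval r
            = (1 + (d : ℂ)) * (p.eval r * (derivative q).eval r) ^ 2 := by
          rw [hRp]
          simp only [eval_add, eval_mul, eval_sub, eval_C, hQr']
          ring
        rw [h0] at hcalc
        simp only [eval_zero] at hcalc
        have h1d : (1 : ℂ) + (d : ℂ) ≠ 0 := by
          have h' : ((1 + d : ℕ) : ℂ) ≠ 0 := Nat.cast_ne_zero.2 (by omega)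
          push_cast at h'
          exact h'
        exact (mul_ne_zero h1d (pow_ne_zero 2 (mul_ne_zero hPr hq1))) hcalc.symm
    have hfin : {x : ℂ | Rp.IsRoot x}.Finite := Polynomial.finite_setOf_isRoot hR0
    have hinf : (Set.range f).Infinite := Set.infinite_range_of_injective hinj
    refine hinf (hfin.subset ?_)
    rintro x ⟨u, rfl⟩
    exact hK1 u
  · -- reverse direction
    intro hbad u
    by_cases hcop : IsCoprime p q
    · have h' : ¬ ∀ z : ℂ, p.rootMultiplicity z ≤ 2 ∧ q.rootMultiplicity z ≤ 2 :=
        fun h => hbad ⟨hcop, h⟩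
      push_neg at h'
      obtain ⟨z₀, hz₀⟩ := h'
      have hz₀' : 2 < p.rootMultiplicity z₀ ∨ 2 < q.rootMultiplicity z₀ := by
        by_cases hle : p.rootMultiplicity z₀ ≤ 2
        · exact Or.inr (hz₀ hle)
        · exact Or.inl (by omega)
      rcases hz₀' with h | h
      · obtain ⟨e0, e1, e2⟩ := aux_evals_zero h
        refine ⟨z₀, ?_, ?_⟩
        · simp only [eval_add, eval_mul, eval_sub, eval_C, eval_X]
          rw [e0, e1]
          ring
        · simp only [derivative_add, derivative_sub, derivative_mul, derivative_C,
            derivative_X, zero_mul, mul_zero, add_zero, zero_add, one_mul, mul_one,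
            eval_add, eval_mul, eval_sub, eval_C, eval_X, eval_one, eval_zero]
          rw [e0, e1, e2]
          ring
      · obtain ⟨e0, e1, e2⟩ := aux_evals_zero h
        refine ⟨z₀, ?_, ?_⟩
        · simp only [eval_add, eval_mul, eval_sub, eval_C, eval_X]
          rw [e0, e1]
          ring
        · simp only [derivative_add, derivative_sub, derivative_mul, derivative_C,
            derivative_X, zero_mul, mul_zero, add_zero, zero_add, one_mul, mul_one,
            eval_add, eval_mul, eval_sub, eval_C, eval_X, eval_one, eval_zero]
          rw [e0, e1, e2]
          ring
    · obtain ⟨z₀, hpz, hqz⟩ := aux_common_root hp0 hcop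
      refine ⟨z₀, ?_, ?_⟩
      · simp only [eval_add, eval_mul, eval_sub, eval_C, eval_X]
        rw [hpz, hqz]
        ring
      · simp only [derivative_add, derivative_sub, derivative_mul, derivative_C,
          derivative_X, zero_mul, mul_zero, add_zero, zero_add, one_mul, mul_one,
          eval_add, eval_mul, eval_sub, eval_C, eval_X, eval_one, eval_zero]
        rw [hpz, hqz]
        ring
end

section
/- Let z₁, z₂, z₃ ∈ ℂ be pairwise distinct, set a = −(z₁ + z₂ + z₃), b = z₁z₂ + z₁z₃ + z₂z₃, c = −z₁z₂z₃, and assume a² − 3b ≠ 0. Let I₁ and I₂ be the two roots (with multiplicity) of ID₃(P)(u) = (a² − 3b)u² + (ab − 9c)u + (b² − 3ac), so that I₁ + I₂ = −(ab − 9c)/(a² − 3b). Then the centroid of the two isodynamic points together with the mass center (z₁ + z₂ + z₃)/3 satisfies (I₁ + I₂ + (z₁ + z₂ + z₃)/3)/3 = (2/3)²·((z₁ + z₂ + z₃)³ − 27·z₁z₂z₃)/(4a² − 12b), where 4a² − 12b is the discriminant of P′(z) = 3z² + 2az + b. -/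
/-! Comparing the factored and expanded forms of `ID₃(P)` at `u = 0` and `u = 1` gives Vieta's
formula for `I₁ + I₂`; since `z₁ + z₂ + z₃ = -a` and `z₁z₂z₃ = -c`, the centroid identity is then
a rational identity in `a, b, c`. -/

theorem add_eq_neg_div_of_forall_eq_mul_sub_mul_sub {K : Type*} [Field K] {A B C r s : K}
    (hA : A ≠ 0) (h : ∀ u : K, A * u ^ 2 + B * u + C = A * (u - r) * (u - s)) :
    r + s = -B / A := by
  rw [eq_div_iff hA]
  linear_combination h 1 - h 0

theorem isodynamic_centroid_eq {K : Type*} [Field K] [CharZero K] (a b c : K)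
    (h : a ^ 2 - 3 * b ≠ 0) :
    (-(a * b - 9 * c) / (a ^ 2 - 3 * b) + -a / 3) / 3
      = (2 / 3) ^ 2 * ((-a) ^ 3 - 27 * -c) / (4 * a ^ 2 - 12 * b) := by
  have h' : 4 * a ^ 2 - 12 * b ≠ 0 := by contrapose! h; linear_combination h / 4
  rw [div_add_div _ _ h three_ne_zero, div_div, div_eq_div_iff (by simp [h]) h']
  ring

theorem centroid_of_isodynamic_points_and_mass_center_general
    (z₁ z₂ z₃ : ℂ)
    (a b c : ℂ)
    (ha : a = -(z₁ + z₂ + z₃))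
    (hc : c = -(z₁ * z₂ * z₃))
    (hΔ : a ^ 2 - 3 * b ≠ 0)
    (I₁ I₂ : ℂ)
    (hroots : ∀ u : ℂ,
      (a ^ 2 - 3 * b) * u ^ 2 + (a * b - 9 * c) * u + (b ^ 2 - 3 * a * c)
        = (a ^ 2 - 3 * b) * (u - I₁) * (u - I₂)) :
    I₁ + I₂ = -(a * b - 9 * c) / (a ^ 2 - 3 * b) ∧
    (I₁ + I₂ + (z₁ + z₂ + z₃) / 3) / 3
      = (2 / 3) ^ 2 * ((z₁ + z₂ + z₃) ^ 3 - 27 * (z₁ * z₂ * z₃))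
          / (4 * a ^ 2 - 12 * b) := by
  have hsum := add_eq_neg_div_of_forall_eq_mul_sub_mul_sub hΔ hroots
  have hz_sum : z₁ + z₂ + z₃ = -a := by rw [ha, neg_neg]
  have hz_prod : z₁ * z₂ * z₃ = -c := by rw [hc, neg_neg]
  refine ⟨hsum, ?_⟩
  rw [hsum, hz_sum, hz_prod]
  exact isodynamic_centroid_eq a b c hΔ

/-- For pairwise distinct `z₁, z₂, z₃` with elementary symmetric
data `a, b, c` and `a² − 3b ≠ 0`, if `I₁, I₂` are the two roots (with
multiplicity) of the isodynamic quadratic `ID₃(P)`, then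
`I₁ + I₂ = −(ab − 9c)/(a² − 3b)` and the centroid of the two isodynamic points
together with the mass center `(z₁ + z₂ + z₃)/3` equals
`(2/3)²·((z₁ + z₂ + z₃)³ − 27·z₁z₂z₃)/(4a² − 12b)`, where `4a² − 12b` is the
discriminant of `P′(z) = 3z² + 2az + b`. -/
theorem centroid_of_isodynamic_points_and_mass_center
    (z₁ z₂ z₃ : ℂ) (h12 : z₁ ≠ z₂) (h13 : z₁ ≠ z₃) (h23 : z₂ ≠ z₃)
    (a b c : ℂ)
    (ha : a = -(z₁ + z₂ + z₃))
    (hb : b = z₁ * z₂ + z₁ * z₃ + z₂ * z₃)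
    (hc : c = -(z₁ * z₂ * z₃))
    (hΔ : a ^ 2 - 3 * b ≠ 0)
    (I₁ I₂ : ℂ)
    (hroots : ∀ u : ℂ,
      (a ^ 2 - 3 * b) * u ^ 2 + (a * b - 9 * c) * u + (b ^ 2 - 3 * a * c)
        = (a ^ 2 - 3 * b) * (u - I₁) * (u - I₂)) :
    I₁ + I₂ = -(a * b - 9 * c) / (a ^ 2 - 3 * b) ∧
    (I₁ + I₂ + (z₁ + z₂ + z₃) / 3) / 3
      = (2 / 3) ^ 2 * ((z₁ + z₂ + z₃) ^ 3 - 27 * (z₁ * z₂ * z₃))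
          / (4 * a ^ 2 - 12 * b) :=
  centroid_of_isodynamic_points_and_mass_center_general z₁ z₂ z₃ a b c ha hc hΔ I₁ I₂ hroots
end

section
/- Let P ∈ ℂ[X] be monic of degree d ≥ 3, and regard D_P(z,u) = d·P(z) + (u − z)·P′(z) and ∂_zD_P(z,u) = (d−1)·P′(z) + (u − z)·P″(z) as polynomials in z with coefficients in ℂ[u]; their degrees in z are d−1 and d−2, respectively. Let R(u) ∈ ℂ[u] be the resultant of D_P and ∂_zD_P with respect to z. Then R has degree at most 2d−3 in u, its coefficient of u^{2d−3} equals the resultant of P′ and P″, and hence this coefficient vanishes if and only if P′ has a multiple root. Consequently, the isodynamic polynomial ID_d(P), i.e. the discriminant of D_P(z,u) with respect to z, has degree less than 2d−4 in u if and only if the derivative P′ of P has a multiple zero. -/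
open Polynomial

/-- The Sylvester matrix of two polynomials `f` and `g`, regarded as having
degrees (at most) `m` and `n` respectively: a square matrix of size `n + m`
whose first `n` rows contain the shifted coefficient sequences of `f` and
whose last `m` rows contain the shifted coefficient sequences of `g`. -/
noncomputable def sylvesterMatrix {R : Type*} [CommRing R] (m n : ℕ)
    (f g : Polynomial R) : Matrix (Fin (n + m)) (Fin (n + m)) R :=
  Matrix.of fun i j =>
    if (i : ℕ) < n then
      if (i : ℕ) ≤ (j : ℕ) ∧ (j : ℕ) ≤ (i : ℕ) + m then f.coeff (m + i - j) else 0
    else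
      if (i : ℕ) - n ≤ (j : ℕ) ∧ (j : ℕ) ≤ ((i : ℕ) - n) + n then
        g.coeff (n + ((i : ℕ) - n) - j)
      else 0

/-- The resultant of two polynomials `f` and `g` of degrees (at most) `m`
and `n`: the determinant of their Sylvester matrix. -/
noncomputable def resultant {R : Type*} [CommRing R] (m n : ℕ)
    (f g : Polynomial R) : R :=
  (sylvesterMatrix m n f g).det

/-!
Over `ℂ[u]` one has `D_P = F + u·P′` and `∂_zD_P = G + u·P″` with `F = dP − zP′` and
`G = (d−1)P′ − zP″` free of `u`. Hence the Sylvester matrix of `D_P, ∂_zD_P` is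
`u·S(P′, P″) + S(F, G)`, whose determinant has degree at most its size `2d − 3` in `u`,
with top coefficient `det S(P′, P″) = Res(P′, P″)`; over `ℂ` this vanishes iff `P′, P″` share
a root. The `z^k`-coefficient of `F` is `(d − k)·P_k`, so the top term of `F` cancels and the
leading `z`-coefficient of `D_P` is linear in `u`: dividing `R` by it lowers the degree by
exactly one.
-/

open Matrix

section Sylvester

variable {R : Type*} [CommRing R] (m n : ℕ)

theorem sylvesterMatrix_eq_submatrix_sylvester (f g : R[X]) :
    sylvesterMatrix m n f g =
      (sylvester f g m n)ᵀ.submatrix ((finCongr (add_comm n m)).trans Fin.revPerm)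
        ((finCongr (add_comm n m)).trans Fin.revPerm) := by
  ext i j
  have hi := i.isLt
  have hj := j.isLt
  simp only [sylvesterMatrix, sylvester, of_apply, submatrix_apply, transpose_apply,
    Equiv.trans_apply, finCongr_apply, Fin.revPerm_apply, Fin.addCases, Fin.val_rev, Fin.val_cast,
    Set.mem_Icc, eq_rec_constant, Fin.val_subNat, Fin.val_castLT]
  split_ifs <;> first | rfl | omega | (congr 1; omega)

theorem resultant_eq_polynomial_resultant (f g : R[X]) :
    _root_.resultant m n f g = Polynomial.resultant f g m n := by
  rw [_root_.resultant, sylvesterMatrix_eq_submatrix_sylvester, det_submatrix_equiv_self,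
    det_transpose, Polynomial.resultant]

theorem resultant_natDegree_natDegree_eq_zero_iff {K : Type*} [Field K] [IsAlgClosed K]
    {f g : K[X]} (hf : f ≠ 0) :
    _root_.resultant f.natDegree g.natDegree f g = 0 ↔ ∃ z, f.eval z = 0 ∧ g.eval z = 0 := by
  rw [resultant_eq_polynomial_resultant, Polynomial.resultant_eq_zero_iff,
    isCoprime_iff_aeval_ne_zero_of_isAlgClosed (k := K) K]
  simp [hf]

variable (f₀ f₁ g₀ g₁ : R[X])

theorem sylvesterMatrix_map_add_C_X_mul :
    sylvesterMatrix m n (f₀.map C + C X * f₁.map C) (g₀.map C + C X * g₁.map C) =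
      (X : R[X]) • (sylvesterMatrix m n f₁ g₁).map C + (sylvesterMatrix m n f₀ g₀).map C := by
  ext i j : 1
  simp only [sylvesterMatrix, Matrix.add_apply, Matrix.smul_apply, map_apply, of_apply,
    coeff_add, coeff_map, coeff_C_mul, smul_eq_mul]
  split_ifs <;> simp [add_comm]

theorem natDegree_resultant_map_add_C_X_mul_le :
    (_root_.resultant m n (f₀.map C + C X * f₁.map C) (g₀.map C + C X * g₁.map C)).natDegree
      ≤ n + m := by
  simpa [_root_.resultant, sylvesterMatrix_map_add_C_X_mul] using
    natDegree_det_X_add_C_le (sylvesterMatrix m n f₁ g₁) (sylvesterMatrix m n f₀ g₀)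

theorem coeff_resultant_map_add_C_X_mul :
    (_root_.resultant m n (f₀.map C + C X * f₁.map C) (g₀.map C + C X * g₁.map C)).coeff (n + m)
      = _root_.resultant m n f₁ g₁ := by
  simpa [_root_.resultant, sylvesterMatrix_map_add_C_X_mul] using
    coeff_det_X_add_C_card (sylvesterMatrix m n f₁ g₁) (sylvesterMatrix m n f₀ g₀)

end Sylvester

section PolarDerivative

variable {R : Type*} [CommRing R]

theorem coeff_C_mul_sub_X_mul_derivative (c : R) (p : R[X]) (k : ℕ) :
    (C c * p - X * derivative p).coeff k = (c - k) * p.coeff k := by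
  cases k with
  | zero => simp
  | succ k => simp [coeff_derivative]; ring

theorem natDegree_C_natDegree_mul_sub_X_mul_derivative_le [IsAddTorsionFree R] (p : R[X]) :
    (C (p.natDegree : R) * p - X * derivative p).natDegree ≤ (derivative p).natDegree := by
  rw [natDegree_derivative, natDegree_le_iff_coeff_eq_zero]
  intro k hk
  rw [coeff_C_mul_sub_X_mul_derivative]
  rcases eq_or_lt_of_le (show p.natDegree ≤ k by omega) with rfl | hlt
  · rw [sub_self, zero_mul]
  · rw [coeff_eq_zero_of_natDegree_lt hlt, mul_zero]

theorem C_C_mul_map_add_sub_X_mul_derivative_map (c : R) (p : R[X]) :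
    C (C c) * p.map C + (C X - X) * derivative (p.map C) =
      (C c * p - X * derivative p).map C + C X * (derivative p).map C := by
  simp only [derivative_map, Polynomial.map_sub, Polynomial.map_mul, map_C, map_X]
  ring

variable {f₀ f₁ : R[X]}

theorem coeff_map_C_add_C_X_mul_map_C (k : ℕ) :
    (f₀.map C + C X * f₁.map C).coeff k = C (f₁.coeff k) * X + C (f₀.coeff k) := by
  simp only [coeff_add, coeff_map, coeff_C_mul]
  ring

theorem natDegree_coeff_natDegree_map_C_add_C_X_mul_map_C (hf₁ : f₁ ≠ 0) :
    ((f₀.map C + C X * f₁.map C).coeff f₁.natDegree).natDegree = 1 := by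
  rw [coeff_map_C_add_C_X_mul_map_C]
  exact natDegree_linear (leadingCoeff_ne_zero.mpr hf₁)

theorem natDegree_map_C_add_C_X_mul_map_C (h : f₀.natDegree ≤ f₁.natDegree) (hf₁ : f₁ ≠ 0) :
    (f₀.map C + C X * f₁.map C).natDegree = f₁.natDegree := by
  refine le_antisymm (natDegree_le_iff_coeff_eq_zero.mpr fun k hk => ?_)
    (le_natDegree_of_ne_zero fun h0 => ?_)
  · rw [coeff_map_C_add_C_X_mul_map_C, coeff_eq_zero_of_natDegree_lt hk,
      coeff_eq_zero_of_natDegree_lt (h.trans_lt hk)]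
    simp
  · simpa [h0] using natDegree_coeff_natDegree_map_C_add_C_X_mul_map_C (f₀ := f₀) hf₁

theorem natDegree_leadingCoeff_map_C_add_C_X_mul_map_C (h : f₀.natDegree ≤ f₁.natDegree)
    (hf₁ : f₁ ≠ 0) : (f₀.map C + C X * f₁.map C).leadingCoeff.natDegree = 1 := by
  rw [leadingCoeff, natDegree_map_C_add_C_X_mul_map_C h hf₁]
  exact natDegree_coeff_natDegree_map_C_add_C_X_mul_map_C hf₁

end PolarDerivative

theorem natDegree_lt_iff_coeff_mul_eq_zero {R : Type*} [CommRing R] [IsDomain R] {a q : R[X]}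
    {N : ℕ} (hN : 0 < N) (ha : a.natDegree = 1) (h : (a * q).natDegree ≤ N + 1) :
    q.natDegree < N ↔ (a * q).coeff (N + 1) = 0 := by
  rcases eq_or_ne q 0 with rfl | hq
  · simpa using hN
  have ha0 : a ≠ 0 := ne_zero_of_natDegree_gt (ha ▸ Nat.one_pos)
  have hdeg : (a * q).natDegree = 1 + q.natDegree := by rw [natDegree_mul ha0 hq, ha]
  constructor
  · intro hlt
    exact coeff_eq_zero_of_natDegree_lt (by omega)
  · intro hcoeff
    by_contra! hge
    have htop : (a * q).natDegree = N + 1 := by omega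
    rw [← htop] at hcoeff
    exact mul_ne_zero ha0 hq (leadingCoeff_eq_zero.mp hcoeff)

theorem resultant_of_polar_derivative_leading_coefficient_general
    (d : ℕ) (hd : 3 ≤ d) (P : ℂ[X]) (hdeg : P.natDegree = d) :
    ∀ Pm DP SDP : Polynomial (Polynomial ℂ), ∀ Res : Polynomial ℂ,
      Pm = P.map Polynomial.C →
      DP = Polynomial.C (Polynomial.C (d : ℂ)) * Pm
            + (Polynomial.C Polynomial.X - Polynomial.X) * derivative Pm →
      SDP = Polynomial.C (Polynomial.C ((d : ℂ) - 1)) * derivative Pm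
            + (Polynomial.C Polynomial.X - Polynomial.X) * derivative (derivative Pm) →
      Res = resultant (d - 1) (d - 2) DP SDP →
      DP.natDegree = d - 1 ∧
      SDP.natDegree = d - 2 ∧
      Res.natDegree ≤ 2 * d - 3 ∧
      Res.coeff (2 * d - 3)
        = resultant (d - 1) (d - 2) (derivative P) (derivative (derivative P)) ∧
      (Res.coeff (2 * d - 3) = 0 ↔
        ∃ z : ℂ, (derivative P).eval z = 0 ∧ (derivative (derivative P)).eval z = 0) ∧
      (∀ ID : Polynomial ℂ, Res = DP.leadingCoeff * ID →
        (ID.natDegree < 2 * d - 4 ↔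
          ∃ z : ℂ, (derivative P).eval z = 0 ∧ (derivative (derivative P)).eval z = 0)) := by
  intro Pm DP SDP Res hPm hDP hSDP hRes
  set Q := derivative P
  have hQ : Q.natDegree = d - 1 := by rw [natDegree_derivative, hdeg]
  have hQ' : (derivative Q).natDegree = d - 2 := by rw [natDegree_derivative, hQ]; omega
  have hQ0 : Q ≠ 0 := ne_zero_of_natDegree_gt (n := 0) (by omega)
  have hQ'0 : derivative Q ≠ 0 := ne_zero_of_natDegree_gt (n := 0) (by omega)
  have hF : (C (d : ℂ) * P - X * Q).natDegree ≤ Q.natDegree := by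
    simpa only [hdeg] using natDegree_C_natDegree_mul_sub_X_mul_derivative_le P
  have hG : (C ((d : ℂ) - 1) * Q - X * derivative Q).natDegree ≤ (derivative Q).natDegree := by
    simpa only [hQ, Nat.cast_pred (show 0 < d by omega)] using
      natDegree_C_natDegree_mul_sub_X_mul_derivative_le Q
  rw [hPm, C_C_mul_map_add_sub_X_mul_derivative_map] at hDP
  rw [hPm, derivative_map, C_C_mul_map_add_sub_X_mul_derivative_map] at hSDP
  have hsize : 2 * d - 3 = d - 2 + (d - 1) := by omega
  have hRes_le : Res.natDegree ≤ 2 * d - 3 := by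
    rw [hRes, hDP, hSDP, hsize]
    exact natDegree_resultant_map_add_C_X_mul_le _ _ _ _ _ _
  have hRes_coeff : Res.coeff (2 * d - 3) = resultant (d - 1) (d - 2) Q (derivative Q) := by
    rw [hRes, hDP, hSDP, hsize, coeff_resultant_map_add_C_X_mul]
  have hroot : resultant (d - 1) (d - 2) Q (derivative Q) = 0 ↔
      ∃ z : ℂ, Q.eval z = 0 ∧ (derivative Q).eval z = 0 := by
    rw [← hQ, ← hQ']
    exact resultant_natDegree_natDegree_eq_zero_iff hQ0
  refine ⟨hDP ▸ (natDegree_map_C_add_C_X_mul_map_C hF hQ0).trans hQ,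
    hSDP ▸ (natDegree_map_C_add_C_X_mul_map_C hG hQ'0).trans hQ', hRes_le, hRes_coeff,
    hRes_coeff ▸ hroot, fun ID hID => ?_⟩
  rw [← hroot, ← hRes_coeff, hID, show 2 * d - 3 = 2 * d - 4 + 1 by omega]
  refine natDegree_lt_iff_coeff_mul_eq_zero (by omega) ?_ (by rw [← hID]; omega)
  rw [hDP]
  exact natDegree_leadingCoeff_map_C_add_C_X_mul_map_C hF hQ0

/-- For a monic `P` of degree `d ≥ 3`, regard the polar
derivative `D_P(z,u) = d·P(z) + (u − z)·P′(z)` and its `z`-derivative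
`∂_zD_P(z,u) = (d−1)·P′(z) + (u − z)·P″(z)` as polynomials in `z` over `ℂ[u]`;
their `z`-degrees are `d − 1` and `d − 2`. Their resultant `R(u)` with respect
to `z` has degree at most `2d − 3` in `u`, its coefficient of `u^{2d−3}` is the
resultant of `P′` and `P″`, this coefficient vanishes iff `P′` has a multiple
root, and consequently the isodynamic polynomial `ID_d(P)` (the discriminant,
i.e. `R` divided by the leading `z`-coefficient of `D_P`, up to sign) has
degree less than `2d − 4` iff `P′` has a multiple zero. -/
theorem resultant_of_polar_derivative_leading_coefficient
    (d : ℕ) (hd : 3 ≤ d) (P : ℂ[X]) (hm : P.Monic) (hdeg : P.natDegree = d) :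
    ∀ Pm DP SDP : Polynomial (Polynomial ℂ), ∀ Res : Polynomial ℂ,
      Pm = P.map Polynomial.C →
      DP = Polynomial.C (Polynomial.C (d : ℂ)) * Pm
            + (Polynomial.C Polynomial.X - Polynomial.X) * derivative Pm →
      SDP = Polynomial.C (Polynomial.C ((d : ℂ) - 1)) * derivative Pm
            + (Polynomial.C Polynomial.X - Polynomial.X) * derivative (derivative Pm) →
      Res = resultant (d - 1) (d - 2) DP SDP →
      DP.natDegree = d - 1 ∧
      SDP.natDegree = d - 2 ∧
      Res.natDegree ≤ 2 * d - 3 ∧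
      Res.coeff (2 * d - 3)
        = resultant (d - 1) (d - 2) (derivative P) (derivative (derivative P)) ∧
      (Res.coeff (2 * d - 3) = 0 ↔
        ∃ z : ℂ, (derivative P).eval z = 0 ∧ (derivative (derivative P)).eval z = 0) ∧
      (∀ ID : Polynomial ℂ, Res = DP.leadingCoeff * ID →
        (ID.natDegree < 2 * d - 4 ↔
          ∃ z : ℂ, (derivative P).eval z = 0 ∧ (derivative (derivative P)).eval z = 0)) :=
  resultant_of_polar_derivative_leading_coefficient_general d hd P hdeg
end

section
/- Let a, b, c ∈ ℂ, and let p(X) = X² + aX + b and q(X) = X + c (the case d = 1, ∂ = 1). Then the numerator of the polar derivative ND(z,u) = p(z)q(z) + (u − z)·(p′(z)q(z) − p(z)q′(z)) equals, as a polynomial in z, (a − c + u)z² + (2b + 2cu)z + (bc + (ac − b)u), and its discriminant with respect to z satisfies the identity (2b + 2cu)² − 4(a − c + u)(bc + (ac − b)u) = 4·(b − ac + c²)·(u² + au + b) for all u ∈ ℂ. In particular, when b − ac + c² ≠ 0, the isodynamic points of the rational function (z² + az + b)/(z + c) are exactly the roots of its numerator z² + az + b. -/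
/-! The polar-derivative numerator of `(z² + az + b)/(z + c)` is a quadratic in `z` whose
discriminant factors as `4·(b − ac + c²)·p(u)`. A quadratic has a double root exactly when its
discriminant vanishes, as long as its leading coefficient `a − c + u` is nonzero; and at a root `u`
of `p` that coefficient cannot vanish, since `p(c − a) = b − ac + c²`. -/

theorem discrim_eq_zero_of_double_root {R : Type*} [CommRing R] {a b c x : R}
    (hx : a * (x * x) + b * x + c = 0) (hx' : 2 * a * x + b = 0) : discrim a b c = 0 := by
  rw [discrim_eq_sq_of_quadratic_eq_zero hx, hx', sq, zero_mul]

theorem exists_double_root_of_discrim_eq_zero {K : Type*} [Field K] [NeZero (2 : K)] {a b c : K}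
    (ha : a ≠ 0) (h : discrim a b c = 0) :
    ∃ x, a * (x * x) + b * x + c = 0 ∧ 2 * a * x + b = 0 := by
  refine ⟨-b / (2 * a), (quadratic_eq_zero_iff_of_discrim_eq_zero ha h _).2 rfl, ?_⟩
  have : (2 : K) * a ≠ 0 := mul_ne_zero (NeZero.ne 2) ha
  field_simp
  ring

section PolarDerivative

variable {R : Type*} [CommRing R] (a b c : R)

theorem polar_numerator_eq (z u : R) :
    (z ^ 2 + a * z + b) * (z + c) + (u - z) * ((2 * z + a) * (z + c) - (z ^ 2 + a * z + b))
      = (a - c + u) * z ^ 2 + (2 * b + 2 * c * u) * z + (b * c + (a * c - b) * u) := by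
  ring

theorem discrim_polar_numerator (u : R) :
    discrim (a - c + u) (2 * b + 2 * c * u) (b * c + (a * c - b) * u)
      = 4 * (b - a * c + c ^ 2) * (u ^ 2 + a * u + b) := by
  rw [discrim]
  ring

theorem polar_numerator_leadingCoeff_ne_zero [NoZeroDivisors R] {a b c u : R}
    (hK : b - a * c + c ^ 2 ≠ 0) (hu : u ^ 2 + a * u + b = 0) : a - c + u ≠ 0 := by
  intro hA
  exact hK (by linear_combination hu - (u + c) * hA)

end PolarDerivative

/-- For `p(z) = z² + az + b`, `q(z) = z + c` and `d = 1`, the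
numerator of the polar derivative
`ND(z,u) = p(z)q(z) + (u − z)·(p′(z)q(z) − p(z)q′(z))` equals, as a polynomial
in `z`, `(a − c + u)z² + (2b + 2cu)z + (bc + (ac − b)u)`, whose discriminant in
`z` equals `4·(b − ac + c²)·(u² + au + b)`; in particular, when
`b − ac + c² ≠ 0`, the isodynamic points of `(z² + az + b)/(z + c)` are exactly
the roots of `z² + az + b`. -/
theorem isodynamic_points_of_degree_two_one_rational_function
    (a b c : ℂ) :
    (∀ z u : ℂ,
      (z ^ 2 + a * z + b) * (z + c)
        + (u - z) * ((2 * z + a) * (z + c) - (z ^ 2 + a * z + b))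
      = (a - c + u) * z ^ 2 + (2 * b + 2 * c * u) * z
        + (b * c + (a * c - b) * u)) ∧
    (∀ u : ℂ,
      (2 * b + 2 * c * u) ^ 2 - 4 * (a - c + u) * (b * c + (a * c - b) * u)
        = 4 * (b - a * c + c ^ 2) * (u ^ 2 + a * u + b)) ∧
    (b - a * c + c ^ 2 ≠ 0 → ∀ u : ℂ,
      (∃ z : ℂ,
        (z ^ 2 + a * z + b) * (z + c)
          + (u - z) * ((2 * z + a) * (z + c) - (z ^ 2 + a * z + b)) = 0 ∧
        2 * (a - c + u) * z + (2 * b + 2 * c * u) = 0)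
      ↔ u ^ 2 + a * u + b = 0) := by
  refine ⟨polar_numerator_eq a b c, discrim_polar_numerator a b c, fun hK u => ?_⟩
  have hdisc : discrim (a - c + u) (2 * b + 2 * c * u) (b * c + (a * c - b) * u) = 0
      ↔ u ^ 2 + a * u + b = 0 := by
    simp [discrim_polar_numerator, hK]
  refine ⟨fun ⟨z, hz, hz'⟩ => hdisc.1 ?_, fun hu => ?_⟩
  · rw [polar_numerator_eq, sq] at hz
    exact discrim_eq_zero_of_double_root hz hz'
  · simp_rw [polar_numerator_eq, sq]
    exact exists_double_root_of_discrim_eq_zero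
      (polar_numerator_leadingCoeff_ne_zero hK hu) (hdisc.2 hu)
end
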